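/- arXiv:1911.00058 — 7 statements merged into one kernel-verified Lean document; each statement's English description precedes it below -/
import Mathlib

section
/- Suppose f : ℕⁿ → K satisfies the difference equation Σ_{0 ≤ α ≤ m} c_α f(x+α) = 0 for every x ∈ ℕⁿ. Then for every β ∈ ℕⁿ, the coefficient of w^β in Q · G equals Σ_{α ≤ m, α+β ≥ m+I} c_α · f(α+β−m−I) when I ≤ β and ¬(m+I ≤ β), and equals 0 otherwise; in particular every argument α+β−m−I occurring in these sums lies in the initial set X₀, so Q·G is determined by the initial data of f alone. -/
/-!
Multiplying `G = w^I · F` by the monomial `c_α w^{m-α}` shifts the coefficients of `F` by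
`m + I - α`, so the coefficient of `w^β` in `Q · G` collects `c_α f(α + β - (m + I))` over those
`α ≤ m` with `m + I ≤ α + β`. When `m + I ≤ β` every `α ≤ m` qualifies and the sum is the
difference equation at `x = β - (m + I)`, hence vanishes; when `I ≰ β` no `α ≤ m` qualifies.
-/

namespace MvPowerSeries

variable {σ R : Type*} [CommSemiring R] {I : σ →₀ ℕ} {f : (σ →₀ ℕ) → R}
  {G : MvPowerSeries σ R}

theorem coeff_monomial_mul_of_coeff_eq_ite
    (hG : ∀ e, coeff e G = if I ≤ e then f (e - I) else 0) (d β : σ →₀ ℕ) (a : R) :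
    coeff β (monomial d a * G) = if d + I ≤ β then a * f (β - (d + I)) else 0 := by
  rw [coeff_monomial_mul]
  by_cases hd : d ≤ β
  · simp only [if_pos hd, hG, le_tsub_iff_left hd, tsub_tsub, mul_ite, mul_zero]
  · rw [if_neg hd, if_neg fun h => hd (le_trans le_self_add h)]

theorem coeff_monomial_tsub_mul_of_coeff_eq_ite
    (hG : ∀ e, coeff e G = if I ≤ e then f (e - I) else 0) {m α : σ →₀ ℕ} (hα : α ≤ m)
    (β : σ →₀ ℕ) (a : R) :
    coeff β (monomial (m - α) a * G) =
      if m + I ≤ α + β then a * f (α + β - (m + I)) else 0 := by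
  have hαmI : α ≤ m + I := le_trans hα le_self_add
  simp only [coeff_monomial_mul_of_coeff_eq_ite hG, tsub_add_eq_add_tsub hα, tsub_le_iff_right,
    tsub_tsub_eq_add_tsub_of_le hαmI, add_comm β α]

theorem coeff_sum_monomial_tsub_mul_of_coeff_eq_ite
    (hG : ∀ e, coeff e G = if I ≤ e then f (e - I) else 0) {m : σ →₀ ℕ}
    {s : Finset (σ →₀ ℕ)} (hs : ∀ α ∈ s, α ≤ m) (c : (σ →₀ ℕ) → R) (β : σ →₀ ℕ) :
    coeff β ((∑ α ∈ s, monomial (m - α) (c α)) * G) =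
      ∑ α ∈ s.filter (fun α => m + I ≤ α + β), c α * f (α + β - (m + I)) := by
  rw [Finset.sum_mul, map_sum, Finset.sum_filter]
  exact Finset.sum_congr rfl fun α hα =>
    coeff_monomial_tsub_mul_of_coeff_eq_ite hG (hs α hα) β (c α)

end MvPowerSeries

theorem generating_series_formula_two_general
    (n : ℕ) (K : Type*) [Field K]
    (m : Fin n →₀ ℕ) (c : (Fin n →₀ ℕ) → K) (f : (Fin n →₀ ℕ) → K)
    (hf : ∀ x : Fin n →₀ ℕ, ∑ α ∈ Finset.Iic m, c α * f (x + α) = 0)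
    (I : Fin n →₀ ℕ)
    (G : MvPowerSeries (Fin n) K)
    (hG : ∀ e : Fin n →₀ ℕ,
      MvPowerSeries.coeff e G = if I ≤ e then f (e - I) else 0)
    (Q : MvPowerSeries (Fin n) K)
    (hQ : Q = ∑ α ∈ Finset.Iic m, (MvPowerSeries.monomial (m - α)) (c α)) :
    ∀ β : Fin n →₀ ℕ,
      MvPowerSeries.coeff β (Q * G) =
        if I ≤ β ∧ ¬ m + I ≤ β then
          ∑ α ∈ (Finset.Iic m).filter (fun α => m + I ≤ α + β),
            c α * f (α + β - (m + I))
        else 0 := by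
  intro β
  rw [hQ, MvPowerSeries.coeff_sum_monomial_tsub_mul_of_coeff_eq_ite hG
    (fun α hα => Finset.mem_Iic.mp hα)]
  split_ifs with hβ
  · rfl
  by_cases hmI : m + I ≤ β
  · rw [Finset.filter_true_of_mem fun α _ => le_trans hmI le_add_self, ← hf (β - (m + I))]
    refine Finset.sum_congr rfl fun α _ => ?_
    rw [add_comm, tsub_add_eq_add_tsub hmI]
  · have hIβ : ¬ I ≤ β := fun h => hβ ⟨h, hmI⟩
    refine Finset.sum_eq_zero fun α hα => absurd ?_ hIβ
    obtain ⟨hαm, hle⟩ := Finset.mem_filter.mp hα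
    exact le_of_add_le_add_left (hle.trans (add_le_add_left (Finset.mem_Iic.mp hαm) β))

/-- Formula (6) of Theorem 1: if `f : ℕⁿ → K` satisfies the difference equation
`Σ_{0 ≤ α ≤ m} c_α f(x+α) = 0`, then for the generating series `G = Σ_x f(x) w^{x+I}`
and `Q = Σ_{α ≤ m} c_α w^{m-α}`, the coefficient of `w^β` in `Q·G` equals
`Σ_{α ≤ m, m+I ≤ α+β} c_α · f(α+β−m−I)` when `I ≤ β` and `¬(m+I ≤ β)`,
and equals `0` otherwise. -/
theorem generating_series_formula_two
    (n : ℕ) (hn : 1 ≤ n) (K : Type*) [Field K]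
    (m : Fin n →₀ ℕ) (c : (Fin n →₀ ℕ) → K) (f : (Fin n →₀ ℕ) → K)
    (hf : ∀ x : Fin n →₀ ℕ, ∑ α ∈ Finset.Iic m, c α * f (x + α) = 0)
    (I : Fin n →₀ ℕ) (hI : ∀ j, I j = 1)
    (G : MvPowerSeries (Fin n) K)
    (hG : ∀ e : Fin n →₀ ℕ,
      MvPowerSeries.coeff e G = if I ≤ e then f (e - I) else 0)
    (Q : MvPowerSeries (Fin n) K)
    (hQ : Q = ∑ α ∈ Finset.Iic m, (MvPowerSeries.monomial (m - α)) (c α)) :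
    ∀ β : Fin n →₀ ℕ,
      MvPowerSeries.coeff β (Q * G) =
        if I ≤ β ∧ ¬ m + I ≤ β then
          ∑ α ∈ (Finset.Iic m).filter (fun α => m + I ≤ α + β),
            c α * f (α + β - (m + I))
        else 0 :=
  generating_series_formula_two_general n K m c f hf I G hG Q hQ
end

section
/- Suppose f : ℕⁿ → K satisfies the difference equation Σ_{0 ≤ α ≤ m} c_α f(x+α) = 0 for every x ∈ ℕⁿ. Let Φ = Σ_{τ ∈ X₀} f(τ) · w^{τ+I} be the generating series of the initial data. Then in K⟦w₁,…,wₙ⟧ one has Q · G = Q · Φ − Σ_{τ ∈ X₀} ( Σ_{α ≤ m, α ≤ τ} c_α · w^{m−α} ) · f(τ) · w^{τ+I}, where the outer sum on the right is a summable family of formal power series. -/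
/-!
Let `π = restrict (Set.Ici (m + I))` keep only the monomials of a power series whose exponent
lies in the upper set `U = {e | m + I ≤ e}`. The difference equation says exactly that
`π (Q * G) = 0`, while `G - Φ` is supported in `U`, hence so is `Q * (G - Φ)`; together
`Q * G = Q * Φ - π (Q * Φ)`. On a single monomial, `π (Q * w^(τ + I))` keeps precisely the terms `c_α w^(m - α + τ + I)` with
`α ≤ τ`, so `π (Q * Φ)` is the sum of the family in the statement, by continuity of `π`
and of multiplication by `Q` for the coefficientwise topology.
-/

open Finset

namespace MvPowerSeries

section Restrict

variable {σ R : Type*} [Semiring R]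

open Classical in
noncomputable def restrict (s : Set (σ →₀ ℕ)) : MvPowerSeries σ R →ₗ[R] MvPowerSeries σ R :=
  LinearMap.pi fun e => if e ∈ s then coeff e else 0

variable {s : Set (σ →₀ ℕ)} {e : σ →₀ ℕ} {p : MvPowerSeries σ R}

theorem coeff_restrict_of_mem (h : e ∈ s) : coeff e (restrict s p) = coeff e p := by
  classical
  change (if e ∈ s then coeff e else 0) p = _
  rw [if_pos h]

theorem coeff_restrict_of_notMem (h : e ∉ s) : coeff e (restrict s p) = 0 := by
  classical
  change (if e ∈ s then coeff e else 0) p = _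
  rw [if_neg h, LinearMap.zero_apply]

theorem restrict_eq_self (h : ∀ e ∉ s, coeff e p = 0) : restrict s p = p := by
  ext e
  by_cases he : e ∈ s
  · exact coeff_restrict_of_mem he
  · rw [coeff_restrict_of_notMem he, h e he]

theorem restrict_eq_zero (h : ∀ e ∈ s, coeff e p = 0) : restrict s p = 0 := by
  ext e
  by_cases he : e ∈ s
  · rw [coeff_restrict_of_mem he, h e he, map_zero]
  · rw [coeff_restrict_of_notMem he, map_zero]

theorem restrict_monomial_of_mem (h : e ∈ s) (a : R) : restrict s (monomial e a) = monomial e a :=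
  restrict_eq_self fun _ he' => coeff_monomial_ne (ne_of_mem_of_not_mem h he').symm a

theorem restrict_monomial_of_notMem (h : e ∉ s) (a : R) : restrict s (monomial e a) = 0 :=
  restrict_eq_zero fun _ he' => coeff_monomial_ne (ne_of_mem_of_not_mem he' h) a

theorem coeff_mul_eq_zero_of_isUpperSet (hs : IsUpperSet s) (hp : ∀ e ∉ s, coeff e p = 0)
    (q : MvPowerSeries σ R) (he : e ∉ s) : coeff e (q * p) = 0 := by
  classical
  rw [coeff_mul]
  refine sum_eq_zero fun x hx => ?_
  have hx₂ : x.2 ≤ e := HasAntidiagonal.antidiagonal.snd_le hx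
  rw [hp x.2 fun h => he (hs hx₂ h), mul_zero]

theorem restrict_mul_of_isUpperSet (hs : IsUpperSet s) (hp : ∀ e ∉ s, coeff e p = 0)
    (q : MvPowerSeries σ R) : restrict s (q * p) = q * p :=
  restrict_eq_self fun _ => coeff_mul_eq_zero_of_isUpperSet hs hp q

end Restrict

namespace WithPiTopology

variable {σ R : Type*} [Semiring R] [TopologicalSpace R] {p : MvPowerSeries σ R}

theorem hasSum_restrict {ι : Type*} {F : ι → MvPowerSeries σ R} (hF : HasSum F p)
    (s : Set (σ →₀ ℕ)) : HasSum (fun i => restrict s (F i)) (restrict s p) := by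
  rw [hasSum_iff_hasSum_coeff] at hF ⊢
  intro e
  by_cases he : e ∈ s
  · simpa only [coeff_restrict_of_mem he] using hF e
  · simpa only [coeff_restrict_of_notMem he] using hasSum_zero

theorem hasSum_monomials_of_coeff_eq_zero {ι : Type*} {g : ι → σ →₀ ℕ}
    (hg : Function.Injective g) (hp : ∀ e ∉ Set.range g, coeff e p = 0) :
    HasSum (fun i => monomial (g i) (coeff (g i) p)) p :=
  (hg.hasSum_iff (f := fun e => monomial e (coeff e p)) fun e he => by rw [hp e he, map_zero]).mpr
    (hasSum_of_monomials_self p)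

theorem hasSum_monomial_add_of_coeff_eq {P : (σ →₀ ℕ) → Prop} [DecidablePred P] {d : σ →₀ ℕ}
    {f : (σ →₀ ℕ) → R} (hp : ∀ e, coeff e p = if d ≤ e ∧ P (e - d) then f (e - d) else 0) :
    HasSum (fun τ : {x // P x} => monomial ((τ : σ →₀ ℕ) + d) (f τ)) p := by
  have hinj : Function.Injective fun τ : {x // P x} => (τ : σ →₀ ℕ) + d :=
    (add_left_injective d).comp Subtype.val_injective
  convert hasSum_monomials_of_coeff_eq_zero hinj fun e he => ?_ using 3 with τ
  · rw [hp, if_pos ⟨le_add_self, by simpa using τ.2⟩, add_tsub_cancel_right]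
  · rw [hp, if_neg]
    rintro ⟨hde, hPe⟩
    exact he ⟨⟨e - d, hPe⟩, tsub_add_cancel_of_le hde⟩

end WithPiTopology

section ReflectedPolynomial

variable {σ R : Type*} [DecidableEq σ] [Semiring R] {m : σ →₀ ℕ} (c : (σ →₀ ℕ) → R)

theorem coeff_sum_monomial_mul_of_le (p : MvPowerSeries σ R) {e : σ →₀ ℕ} (h : m ≤ e) :
    coeff e ((∑ α ∈ Iic m, monomial (m - α) (c α)) * p) =
      ∑ α ∈ Iic m, c α * coeff (e - m + α) p := by
  rw [sum_mul, map_sum]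
  refine sum_congr rfl fun α hα => ?_
  have hαm : α ≤ m := mem_Iic.mp hα
  have hsub : e - (m - α) = e - m + α := by
    ext i
    have := hαm i
    have := h i
    simp only [Finsupp.tsub_apply, Finsupp.add_apply]
    omega
  rw [coeff_monomial_mul, if_pos (tsub_le_self.trans h), hsub]

theorem restrict_sum_monomial_mul_monomial (d τ : σ →₀ ℕ) (a : R) :
    restrict (Set.Ici (m + d)) ((∑ α ∈ Iic m, monomial (m - α) (c α)) * monomial (τ + d) a) =
      (∑ α ∈ Iic m with α ≤ τ, monomial (m - α) (c α)) * monomial (τ + d) a := by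
  simp only [sum_mul, map_sum, monomial_mul_monomial, sum_filter]
  refine sum_congr rfl fun α hα => ?_
  have hαm : α ≤ m := mem_Iic.mp hα
  have hmem : m - α + (τ + d) ∈ Set.Ici (m + d) ↔ α ≤ τ := by
    simp only [Set.mem_Ici, Finsupp.le_def, Finsupp.add_apply, Finsupp.tsub_apply]
    exact forall_congr' fun i => by have := hαm i; omega
  by_cases hατ : α ≤ τ
  · rw [if_pos hατ, restrict_monomial_of_mem (hmem.mpr hατ), monomial_mul_monomial]
  · rw [if_neg hατ, restrict_monomial_of_notMem (mt hmem.mp hατ), zero_mul]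

theorem restrict_sum_monomial_mul_eq_zero {f : (σ →₀ ℕ) → R}
    (hf : ∀ x, ∑ α ∈ Iic m, c α * f (x + α) = 0) {d : σ →₀ ℕ} {G : MvPowerSeries σ R}
    (hG : ∀ e, coeff e G = if d ≤ e then f (e - d) else 0) :
    restrict (Set.Ici (m + d)) ((∑ α ∈ Iic m, monomial (m - α) (c α)) * G) = 0 := by
  refine restrict_eq_zero fun e he => ?_
  rw [Set.mem_Ici] at he
  rw [coeff_sum_monomial_mul_of_le c G (le_self_add.trans he), ← hf (e - (m + d))]
  refine sum_congr rfl fun α _ => ?_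
  have hde : d ≤ e - m + α := le_add_right (le_tsub_of_add_le_left he)
  have hshift : e - m + α - d = e - (m + d) + α := by
    ext i
    have := he i
    simp only [Finsupp.tsub_apply, Finsupp.add_apply] at this ⊢
    omega
  rw [hG, if_pos hde, hshift]

end ReflectedPolynomial

end MvPowerSeries

open MvPowerSeries

theorem generating_series_formula_three_general
    (n : ℕ) (K : Type*) [Field K]
    (m : Fin n →₀ ℕ) (c : (Fin n →₀ ℕ) → K) (f : (Fin n →₀ ℕ) → K)
    (hf : ∀ x : Fin n →₀ ℕ, ∑ α ∈ Finset.Iic m, c α * f (x + α) = 0)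
    (I : Fin n →₀ ℕ)
    (G : MvPowerSeries (Fin n) K)
    (hG : ∀ e : Fin n →₀ ℕ,
      MvPowerSeries.coeff e G = if I ≤ e then f (e - I) else 0)
    (Φ : MvPowerSeries (Fin n) K)
    (hΦ : ∀ e : Fin n →₀ ℕ,
      MvPowerSeries.coeff e Φ = if I ≤ e ∧ ¬ m ≤ e - I then f (e - I) else 0)
    (Q : MvPowerSeries (Fin n) K)
    (hQ : Q = ∑ α ∈ Finset.Iic m, (MvPowerSeries.monomial (m - α)) (c α)) :
    let _inst : TopologicalSpace (MvPowerSeries (Fin n) K) :=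
      @Pi.topologicalSpace (Fin n →₀ ℕ) (fun _ => K) (fun _ => ⊥)
    ∃ S : MvPowerSeries (Fin n) K,
      HasSum (fun τ : {x : Fin n →₀ ℕ // ¬ m ≤ x} =>
        (∑ α ∈ (Finset.Iic m).filter (fun α => α ≤ (τ : Fin n →₀ ℕ)),
            (MvPowerSeries.monomial (m - α)) (c α)) *
          (MvPowerSeries.monomial ((τ : Fin n →₀ ℕ) + I)) (f τ)) S ∧
      Q * G = Q * Φ - S := by
  let _ : TopologicalSpace K := ⊥
  have : DiscreteTopology K := ⟨rfl⟩
  open WithPiTopology in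
  have hΦsum := hasSum_monomial_add_of_coeff_eq (P := fun x => ¬ m ≤ x) hΦ
  have hGΦ : ∀ e ∉ Set.Ici (m + I), coeff e (G - Φ) = 0 := by
    intro e he
    rw [map_sub, hG, hΦ]
    by_cases hIe : I ≤ e
    · rw [if_pos hIe, if_pos ⟨hIe, fun hme => he (le_tsub_iff_right hIe |>.mp hme)⟩, sub_self]
    · rw [if_neg hIe, if_neg fun h => hIe h.1, sub_self]
  have hQG := hQ ▸ restrict_sum_monomial_mul_eq_zero c hf hG
  have hQGΦ := restrict_mul_of_isUpperSet (isUpperSet_Ici (m + I)) hGΦ Q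
  refine ⟨restrict (Set.Ici (m + I)) (Q * Φ), ?_, ?_⟩
  · have hS := WithPiTopology.hasSum_restrict (hΦsum.mul_left Q) (Set.Ici (m + I))
    rw [hQ] at hS ⊢
    simp only [restrict_sum_monomial_mul_monomial] at hS
    exact hS
  · calc Q * G = Q * Φ + Q * (G - Φ) := by ring
      _ = Q * Φ - restrict (Set.Ici (m + I)) (Q * Φ) := by
        rw [← hQGΦ, mul_sub, map_sub, hQG]
        ring

/-- Formula (7) of Theorem 1: if `f : ℕⁿ → K` satisfies the difference equation
`Σ_{0 ≤ α ≤ m} c_α f(x+α) = 0`, then for the generating series `G = Σ_x f(x) w^{x+I}`,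
the generating series `Φ = Σ_{τ ∈ X₀} f(τ) w^{τ+I}` of the initial data and
`Q = Σ_{α ≤ m} c_α w^{m-α}` one has
`Q·G = Q·Φ − Σ_{τ ∈ X₀} (Σ_{α ≤ m, α ≤ τ} c_α w^{m−α}) · f(τ) · w^{τ+I}`,
the sum over `X₀` being a summable family of formal power series (for the
coefficientwise, i.e. product of discrete, topology). -/
theorem generating_series_formula_three
    (n : ℕ) (hn : 1 ≤ n) (K : Type*) [Field K]
    (m : Fin n →₀ ℕ) (c : (Fin n →₀ ℕ) → K) (f : (Fin n →₀ ℕ) → K)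
    (hf : ∀ x : Fin n →₀ ℕ, ∑ α ∈ Finset.Iic m, c α * f (x + α) = 0)
    (I : Fin n →₀ ℕ) (hI : ∀ j, I j = 1)
    (G : MvPowerSeries (Fin n) K)
    (hG : ∀ e : Fin n →₀ ℕ,
      MvPowerSeries.coeff e G = if I ≤ e then f (e - I) else 0)
    (Φ : MvPowerSeries (Fin n) K)
    (hΦ : ∀ e : Fin n →₀ ℕ,
      MvPowerSeries.coeff e Φ = if I ≤ e ∧ ¬ m ≤ e - I then f (e - I) else 0)
    (Q : MvPowerSeries (Fin n) K)
    (hQ : Q = ∑ α ∈ Finset.Iic m, (MvPowerSeries.monomial (m - α)) (c α)) :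
    let _inst : TopologicalSpace (MvPowerSeries (Fin n) K) :=
      @Pi.topologicalSpace (Fin n →₀ ℕ) (fun _ => K) (fun _ => ⊥)
    ∃ S : MvPowerSeries (Fin n) K,
      HasSum (fun τ : {x : Fin n →₀ ℕ // ¬ m ≤ x} =>
        (∑ α ∈ (Finset.Iic m).filter (fun α => α ≤ (τ : Fin n →₀ ℕ)),
            (MvPowerSeries.monomial (m - α)) (c α)) *
          (MvPowerSeries.monomial ((τ : Fin n →₀ ℕ) + I)) (f τ)) S ∧
      Q * G = Q * Φ - S :=
  generating_series_formula_three_general n K m c f hf I G hG Φ hΦ Q hQ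
end

section
/- Suppose f : ℕⁿ → K satisfies the difference equation Σ_{0 ≤ α ≤ m} c_α f(x+α) = 0 for every x ∈ ℕⁿ. For each τ ∈ ℕⁿ define the polynomial P̃_τ = Σ_{α ≤ m, ¬(α ≤ τ)} c_α · w^{m−α}. Then in K⟦w₁,…,wₙ⟧ one has Q · G = Σ_{τ ∈ X₀} f(τ) · w^{τ+I} · P̃_τ, where the sum on the right is a summable family of formal power series. -/
/-!
Expand `Q = P̃_τ + (Q - P̃_τ)` inside `Q · G = Σ_τ f(τ) w^{τ+I} Q`. The terms `c_α w^{m-α}` with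
`α ≤ τ` contribute, after the shift `τ = x + α`, exactly
`Σ_x w^{x+m+I} Σ_{α ≤ m} c_α f(x+α) = 0`, and `P̃_τ = 0` once `m ≤ τ`. Every coefficient of
either side is a finite sum, so the identity is checked coefficientwise: the coefficient of
`w^e` is a sum over `α ≤ m` of `c_α f(e - (m - α + I))`, and the terms with
`α ≤ e - (m - α + I)` are precisely those of the recurrence at `x = e - (m + I)`.
-/

open MvPowerSeries Finset

section TruncatedSub

variable {M : Type*} [AddCommMonoid M] [PartialOrder M] [CanonicallyOrderedAdd M] [Sub M]
  [OrderedSub M] [AddLeftReflectLE M] {a b c : M}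

theorem add_eq_iff_le_and_eq_tsub : a + b = c ↔ b ≤ c ∧ a = c - b :=
  ⟨fun h => ⟨h ▸ le_add_self, (eq_tsub_iff_add_eq_of_le (h ▸ le_add_self)).2 h⟩,
    fun ⟨hb, h⟩ => (eq_tsub_iff_add_eq_of_le hb).1 h⟩

theorem le_and_le_tsub_iff_add_le : b ≤ c ∧ a ≤ c - b ↔ b + a ≤ c :=
  ⟨fun ⟨hb, ha⟩ => (le_tsub_iff_left hb).1 ha,
    fun h => ⟨le_self_add.trans h, (le_tsub_iff_left (le_self_add.trans h)).2 h⟩⟩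

theorem tsub_eq_tsub_add_add_of_add_le (h : b + a ≤ c) : c - b = c - (b + a) + a := by
  rw [tsub_add_eq_tsub_tsub, tsub_add_cancel_of_le (le_and_le_tsub_iff_add_le.2 h).2]

end TruncatedSub

section GeneratingSeries

variable {σ R : Type*} [CommSemiring R] {f : (σ →₀ ℕ) → R} {I : σ →₀ ℕ} {G : MvPowerSeries σ R}

theorem coeff_monomial_mul_of_coeff_eq (hG : ∀ e, coeff e G = if I ≤ e then f (e - I) else 0)
    (e d : σ →₀ ℕ) (a : R) :
    coeff e (monomial d a * G) = if d + I ≤ e then a * f (e - (d + I)) else 0 := by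
  rw [coeff_monomial_mul, hG, tsub_tsub]
  by_cases hd : d ≤ e
  · simp [hd, le_tsub_iff_left hd]
  · have hdI : ¬ d + I ≤ e := fun h => hd (le_self_add.trans h)
    simp [hd, hdI]

variable [DecidableEq σ]

theorem coeff_monomial_add_mul_monomial (e τ d : σ →₀ ℕ) (a b : R) :
    coeff e (monomial (τ + I) a * monomial d b) =
      if d + I ≤ e ∧ τ = e - (d + I) then a * b else 0 := by
  rw [monomial_mul_monomial, coeff_monomial, add_assoc, add_comm I]
  exact if_congr (eq_comm.trans add_eq_iff_le_and_eq_tsub) rfl rfl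

variable (m : σ →₀ ℕ) (c : (σ →₀ ℕ) → R)

noncomputable def reflectedCharPoly : MvPowerSeries σ R :=
  ∑ α ∈ Iic m, monomial (m - α) (c α)

/-- The polynomial `P̃_τ` of the paper. -/
noncomputable def reflectedCharPolyTail (τ : σ →₀ ℕ) : MvPowerSeries σ R :=
  ∑ α ∈ Iic m with ¬ α ≤ τ, monomial (m - α) (c α)

theorem reflectedCharPolyTail_eq_zero_of_le {τ : σ →₀ ℕ} (h : m ≤ τ) :
    reflectedCharPolyTail m c τ = 0 :=
  sum_eq_zero fun _ hα => absurd ((mem_Iic.1 (mem_filter.1 hα).1).trans h) (mem_filter.1 hα).2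

variable (e : σ →₀ ℕ)

theorem coeff_reflectedCharPoly_mul (hG : ∀ e, coeff e G = if I ≤ e then f (e - I) else 0) :
    coeff e (reflectedCharPoly m c * G) =
      ∑ α ∈ Iic m with m - α + I ≤ e, c α * f (e - (m - α + I)) := by
  rw [reflectedCharPoly, sum_mul, map_sum, sum_filter]
  exact sum_congr rfl fun α _ => coeff_monomial_mul_of_coeff_eq hG e (m - α) (c α)

theorem sum_coeff_monomial_mul_reflectedCharPolyTail :
    ∑ τ ∈ Iic e, coeff e (monomial (τ + I) (f τ) * reflectedCharPolyTail m c τ) =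
      ∑ α ∈ Iic m with m - α + I ≤ e ∧ ¬ α ≤ e - (m - α + I), c α * f (e - (m - α + I)) := by
  simp_rw [reflectedCharPolyTail, mul_sum, map_sum, coeff_monomial_add_mul_monomial, sum_filter]
  rw [sum_comm]
  refine sum_congr rfl fun α _ => ?_
  rw [sum_eq_single_of_mem (e - (m - α + I)) (mem_Iic.2 tsub_le_self)
    fun τ _ hτ => by simp [hτ]]
  by_cases h : m - α + I ≤ e <;> by_cases hα : α ≤ e - (m - α + I) <;> simp [h, hα, mul_comm]

theorem sum_recurrence_terms_eq_zero (hf : ∀ x, ∑ α ∈ Iic m, c α * f (x + α) = 0) :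
    ∑ α ∈ Iic m with m - α + I ≤ e ∧ α ≤ e - (m - α + I), c α * f (e - (m - α + I)) = 0 := by
  have hshift : ∀ α ∈ Iic m, m - α + I + α = m + I := fun α hα => by
    rw [add_right_comm, tsub_add_cancel_of_le (mem_Iic.1 hα)]
  have hiff : ∀ α ∈ Iic m, (m - α + I ≤ e ∧ α ≤ e - (m - α + I) ↔ m + I ≤ e) := fun α hα => by
    rw [le_and_le_tsub_iff_add_le, hshift α hα]
  by_cases h : m + I ≤ e
  · rw [filter_true_of_mem fun α hα => (hiff α hα).2 h, ← hf (e - (m + I))]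
    refine sum_congr rfl fun α hα => ?_
    rw [tsub_eq_tsub_add_add_of_add_le ((hshift α hα).le.trans h), hshift α hα]
  · rw [filter_false_of_mem fun α hα => mt (hiff α hα).1 h, sum_empty]

theorem coeff_reflectedCharPoly_mul_eq_sum (hf : ∀ x, ∑ α ∈ Iic m, c α * f (x + α) = 0)
    (hG : ∀ e, coeff e G = if I ≤ e then f (e - I) else 0) :
    coeff e (reflectedCharPoly m c * G) =
      ∑ τ ∈ Iic e, coeff e (monomial (τ + I) (f τ) * reflectedCharPolyTail m c τ) := by
  rw [coeff_reflectedCharPoly_mul m c e hG,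
    ← sum_filter_add_sum_filter_not _ (fun α => α ≤ e - (m - α + I)), filter_filter,
    filter_filter, sum_recurrence_terms_eq_zero m c e hf, zero_add,
    sum_coeff_monomial_mul_reflectedCharPolyTail]

end GeneratingSeries

theorem generating_series_formula_four_general
    (n : ℕ) (K : Type*) [Field K]
    (m : Fin n →₀ ℕ) (c : (Fin n →₀ ℕ) → K) (f : (Fin n →₀ ℕ) → K)
    (hf : ∀ x : Fin n →₀ ℕ, ∑ α ∈ Finset.Iic m, c α * f (x + α) = 0)
    (I : Fin n →₀ ℕ)
    (G : MvPowerSeries (Fin n) K)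
    (hG : ∀ e : Fin n →₀ ℕ,
      MvPowerSeries.coeff e G = if I ≤ e then f (e - I) else 0)
    (Q : MvPowerSeries (Fin n) K)
    (hQ : Q = ∑ α ∈ Finset.Iic m, (MvPowerSeries.monomial (m - α)) (c α)) :
    let _inst : TopologicalSpace (MvPowerSeries (Fin n) K) :=
      @Pi.topologicalSpace (Fin n →₀ ℕ) (fun _ => K) (fun _ => ⊥)
    HasSum (fun τ : {x : Fin n →₀ ℕ // ¬ m ≤ x} =>
        (MvPowerSeries.monomial ((τ : Fin n →₀ ℕ) + I)) (f τ) *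
          ∑ α ∈ (Finset.Iic m).filter (fun α => ¬ α ≤ (τ : Fin n →₀ ℕ)),
            (MvPowerSeries.monomial (m - α)) (c α))
      (Q * G) := by
  intro _
  let : TopologicalSpace K := ⊥
  obtain rfl : Q = reflectedCharPoly m c := hQ
  have hsupport :
      (Function.support fun τ => monomial (τ + I) (f τ) * reflectedCharPolyTail m c τ) ⊆
        {x | ¬ m ≤ x} := fun τ hτ hmτ =>
    hτ (by simp only [reflectedCharPolyTail_eq_zero_of_le m c hmτ, mul_zero])
  refine (hasSum_subtype_iff_of_support_subset hsupport).2
    (WithPiTopology.hasSum_iff_hasSum_coeff.2 fun e => ?_)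
  rw [coeff_reflectedCharPoly_mul_eq_sum m c e hf hG]
  refine hasSum_sum_of_ne_finset_zero fun τ hτ => ?_
  rw [coeff_monomial_mul, if_neg fun h => mem_Iic.not.1 hτ (le_self_add.trans h)]

/-- Formula (8) of Theorem 1: if `f : ℕⁿ → K` satisfies the difference equation
`Σ_{0 ≤ α ≤ m} c_α f(x+α) = 0`, then for the generating series `G = Σ_x f(x) w^{x+I}`
and `Q = Σ_{α ≤ m} c_α w^{m-α}` one has
`Q·G = Σ_{τ ∈ X₀} f(τ) · w^{τ+I} · P̃_τ`, where
`P̃_τ = Σ_{α ≤ m, ¬(α ≤ τ)} c_α w^{m−α}` and the sum over `X₀` is a summable family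
of formal power series (for the coefficientwise, i.e. product of discrete, topology). -/
theorem generating_series_formula_four
    (n : ℕ) (hn : 1 ≤ n) (K : Type*) [Field K]
    (m : Fin n →₀ ℕ) (c : (Fin n →₀ ℕ) → K) (f : (Fin n →₀ ℕ) → K)
    (hf : ∀ x : Fin n →₀ ℕ, ∑ α ∈ Finset.Iic m, c α * f (x + α) = 0)
    (I : Fin n →₀ ℕ) (hI : ∀ j, I j = 1)
    (G : MvPowerSeries (Fin n) K)
    (hG : ∀ e : Fin n →₀ ℕ,
      MvPowerSeries.coeff e G = if I ≤ e then f (e - I) else 0)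
    (Q : MvPowerSeries (Fin n) K)
    (hQ : Q = ∑ α ∈ Finset.Iic m, (MvPowerSeries.monomial (m - α)) (c α)) :
    let _inst : TopologicalSpace (MvPowerSeries (Fin n) K) :=
      @Pi.topologicalSpace (Fin n →₀ ℕ) (fun _ => K) (fun _ => ⊥)
    HasSum (fun τ : {x : Fin n →₀ ℕ // ¬ m ≤ x} =>
        (MvPowerSeries.monomial ((τ : Fin n →₀ ℕ) + I)) (f τ) *
          ∑ α ∈ (Finset.Iic m).filter (fun α => ¬ α ≤ (τ : Fin n →₀ ℕ)),
            (MvPowerSeries.monomial (m - α)) (c α))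
      (Q * G) :=
  generating_series_formula_four_general n K m c f hf I G hG Q hQ
end

section
/- Suppose f : ℕⁿ → K satisfies the difference equation Σ_{0 ≤ α ≤ m} c_α f(x+α) = 0 for every x ∈ ℕⁿ, and let φ : ℕⁿ → K equal f on X₀ and 0 on ℕⁿ∖X₀. For J ∈ {0,1}ⁿ let Γ_J = {x ∈ ℕⁿ : x ≤ m, and for each k, x_k = m_k if J_k = 1 and x_k < m_k if J_k = 0}; for τ ∈ Γ_J let Φ_{τ,J} = Σ_{y ∈ ℕⁿ with y_k = 0 whenever J_k = 0} φ(τ+y) · w^{τ+y+I} ∈ K⟦w₁,…,wₙ⟧, and let P̃_τ = Σ_{α ≤ m, ¬(α ≤ τ)} c_α · w^{m−α}. Then Q · G = Σ_{J ∈ {0,1}ⁿ} Σ_{τ ∈ Γ_J} Φ_{τ,J} · P̃_τ. -/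
/-!
Factor `w^I` out of `G` and of every `Φ_{τ,J}`, and compare coefficients of `w^e`; write
`y_α = e - (m - α)` for the point `e - m + α`. Each `y ∈ ℕⁿ` lies in the support of exactly one
`Φ_{τ,J}`, the one with `τ = y ⊓ m` and `J = {k | m_k ≤ y_k}`, so the right-hand side picks up
`c_α φ(y_α)` exactly when `¬ α ≤ y_α ⊓ m`, which happens iff `¬ m ≤ e`. If `m ≤ e`, the
right-hand side vanishes and the left-hand side is the recurrence at `e - m`. Otherwise
`¬ m ≤ y_α` because `y_α ≤ e`, so `φ(y_α) = f(y_α)` and the two sides agree term by term.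
-/

open MvPowerSeries Finset

section BoxFace

variable {σ : Type*} [Fintype σ] [DecidableEq σ]

noncomputable def boxFace (m : σ →₀ ℕ) (J : σ → Bool) : Finset (σ →₀ ℕ) :=
  (Iic m).filter fun x => ∀ k, if J k then x k = m k else x k < m k

theorem inf_mem_boxFace (m y : σ →₀ ℕ) :
    y ⊓ m ∈ boxFace m fun k => decide (m k ≤ y k) := by
  refine mem_filter.2 ⟨mem_Iic.2 inf_le_right, fun k => ?_⟩
  rw [Finsupp.inf_apply]
  by_cases h : m k ≤ y k <;> simp [h]

theorem eq_inf_of_mem_boxFace {m y τ : σ →₀ ℕ} {J : σ → Bool} (hτ : τ ∈ boxFace m J)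
    (hle : τ ≤ y) (hJ : ∀ k, J k = false → y k = τ k) :
    J = (fun k => decide (m k ≤ y k)) ∧ τ = y ⊓ m := by
  have hface := (mem_filter.1 hτ).2
  have hcoord : ∀ k, J k = decide (m k ≤ y k) ∧ τ k = min (y k) (m k) := fun k => by
    have hk := hface k
    have hyk := hle k
    cases hJk : J k with
    | true =>
      simp only [hJk, if_true] at hk
      simp only [Bool.true_eq, decide_eq_true_eq]
      omega
    | false =>
      simp only [hJk, Bool.false_eq_true, if_false] at hk
      have := hJ k hJk
      simp only [Bool.false_eq, decide_eq_false_iff_not]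
      omega
  exact ⟨funext fun k => (hcoord k).1, Finsupp.ext fun k => (hcoord k).2⟩

theorem sum_boxFace_ite {M : Type*} [AddCommMonoid M] (m y : σ →₀ ℕ)
    (g : (σ → Bool) → (σ →₀ ℕ) → M) :
    ∑ J, ∑ τ ∈ boxFace m J,
        (if τ ≤ y ∧ ∀ k, J k = false → y k = τ k then g J τ else 0) =
      g (fun k => decide (m k ≤ y k)) (y ⊓ m) := by
  rw [Fintype.sum_eq_single _ fun J hJ => sum_eq_zero fun τ hτ =>
      if_neg fun h => hJ (eq_inf_of_mem_boxFace hτ h.1 h.2).1,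
    sum_eq_single_of_mem _ (inf_mem_boxFace m y) fun τ hτ hne =>
      if_neg fun h => hne (eq_inf_of_mem_boxFace hτ h.1 h.2).2]
  refine if_pos ⟨inf_le_left, fun k hk => ?_⟩
  rw [Finsupp.inf_apply]
  simp only [decide_eq_false_iff_not, not_le] at hk
  exact (min_eq_left hk.le).symm

end BoxFace

theorem eq_monomial_mul_of_coeff_eq_ite {σ R : Type*} [Semiring R]
    {A a : MvPowerSeries σ R} {d : σ →₀ ℕ}
    (h : ∀ e, coeff e A = if d ≤ e then coeff (e - d) a else 0) :
    A = monomial d 1 * a := by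
  ext e
  rw [h, coeff_monomial_mul, one_mul]

theorem coeff_sum_monomial_mul {σ R : Type*} [DecidableEq σ] [Semiring R] (m e : σ →₀ ℕ)
    (c : (σ →₀ ℕ) → R) (F : MvPowerSeries σ R) :
    coeff e ((∑ α ∈ Iic m, monomial (m - α) (c α)) * F) =
      ∑ α ∈ Iic m, if m - α ≤ e then c α * coeff (e - (m - α)) F else 0 := by
  simp only [sum_mul, map_sum, coeff_monomial_mul]

section Coefficients

variable {σ R : Type*} [Fintype σ] [DecidableEq σ] [CommSemiring R]
  {m : σ →₀ ℕ} {φ : (σ →₀ ℕ) → R} {ψ : (σ → Bool) → (σ →₀ ℕ) → MvPowerSeries σ R}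

theorem sum_boxFace_coeff_mul
    (hψ : ∀ J τ x,
      coeff x (ψ J τ) = if τ ≤ x ∧ ∀ k, J k = false → x k = τ k then φ x else 0)
    (y : σ →₀ ℕ) (h : (σ →₀ ℕ) → R) :
    ∑ J, ∑ τ ∈ boxFace m J, coeff y (ψ J τ) * h τ = φ y * h (y ⊓ m) := by
  simp only [hψ, ite_mul, zero_mul]
  exact sum_boxFace_ite m y _

theorem coeff_sum_boxFace_mul (c : (σ →₀ ℕ) → R)
    (hψ : ∀ J τ x,
      coeff x (ψ J τ) = if τ ≤ x ∧ ∀ k, J k = false → x k = τ k then φ x else 0)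
    (e : σ →₀ ℕ) :
    coeff e (∑ J, ∑ τ ∈ boxFace m J,
        ψ J τ * ∑ α ∈ (Iic m).filter (fun α => ¬ α ≤ τ), monomial (m - α) (c α)) =
      ∑ α ∈ Iic m, if m - α ≤ e then
        φ (e - (m - α)) * (if ¬ α ≤ (e - (m - α)) ⊓ m then c α else 0) else 0 := by
  have hterm : ∀ J τ, coeff e (ψ J τ * ∑ α ∈ (Iic m).filter (fun α => ¬ α ≤ τ),
      monomial (m - α) (c α)) = ∑ α ∈ Iic m, if m - α ≤ e then
        coeff (e - (m - α)) (ψ J τ) * (if ¬ α ≤ τ then c α else 0) else 0 :=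
      fun J τ => by
    rw [mul_sum, map_sum, sum_filter]
    refine sum_congr rfl fun α _ => ?_
    rw [coeff_mul_monomial]
    split_ifs <;> simp
  simp only [map_sum, hterm]
  rw [sum_congr rfl fun J _ => sum_comm, sum_comm]
  refine sum_congr rfl fun α _ => ?_
  simp only [sum_ite_irrel, sum_const_zero]
  rw [sum_boxFace_coeff_mul hψ]

theorem sum_monomial_mul_eq_sum_boxFace {c : (σ →₀ ℕ) → R} {F : MvPowerSeries σ R}
    (hF : ∀ x, ∑ α ∈ Iic m, c α * coeff (x + α) F = 0)
    (hφ : ∀ x, φ x = if ¬ m ≤ x then coeff x F else 0)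
    (hψ : ∀ J τ x,
      coeff x (ψ J τ) = if τ ≤ x ∧ ∀ k, J k = false → x k = τ k then φ x else 0) :
    (∑ α ∈ Iic m, monomial (m - α) (c α)) * F =
      ∑ J, ∑ τ ∈ boxFace m J,
        ψ J τ * ∑ α ∈ (Iic m).filter (fun α => ¬ α ≤ τ), monomial (m - α) (c α) := by
  ext e
  rw [coeff_sum_monomial_mul, coeff_sum_boxFace_mul c hψ]
  have hle_iff : ∀ α ≤ m, m - α ≤ e → (α ≤ e - (m - α) ↔ m ≤ e) :=
    fun α hα hαe => by rw [le_tsub_iff_right hαe, add_tsub_cancel_of_le hα]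
  by_cases hme : m ≤ e
  · have hαe : ∀ α ≤ m, m - α ≤ e := fun α _ => tsub_le_self.trans hme
    calc ∑ α ∈ Iic m, (if m - α ≤ e then c α * coeff (e - (m - α)) F else 0)
        = ∑ α ∈ Iic m, c α * coeff (e - m + α) F := sum_congr rfl fun α hα => by
          rw [if_pos (hαe α (mem_Iic.1 hα)), tsub_tsub_assoc hme (mem_Iic.1 hα)]
      _ = 0 := hF (e - m)
      _ = _ := (sum_eq_zero fun α hα => by
          have hα' := mem_Iic.1 hα
          have hτ : α ≤ (e - (m - α)) ⊓ m :=
            le_inf ((hle_iff α hα' (hαe α hα')).2 hme) hα'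
          rw [if_pos (hαe α hα'), if_neg (not_not.2 hτ), mul_zero]).symm
  · refine sum_congr rfl fun α hα => ?_
    have hα' := mem_Iic.1 hα
    by_cases hαe : m - α ≤ e
    · have hy : ¬ m ≤ e - (m - α) := fun h => hme (h.trans tsub_le_self)
      have hτ : ¬ α ≤ (e - (m - α)) ⊓ m := fun h =>
        hme ((hle_iff α hα' hαe).1 (le_inf_iff.1 h).1)
      rw [if_pos hαe, if_pos hαe, if_pos hτ, hφ, if_pos hy, mul_comm]
    · rw [if_neg hαe, if_neg hαe]

end Coefficients

theorem generating_series_theorem_two_general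
    (n : ℕ) (K : Type*) [Field K]
    (m : Fin n →₀ ℕ) (c : (Fin n →₀ ℕ) → K) (f : (Fin n →₀ ℕ) → K)
    (hf : ∀ x : Fin n →₀ ℕ, ∑ α ∈ Finset.Iic m, c α * f (x + α) = 0)
    (φ : (Fin n →₀ ℕ) → K)
    (hφ : ∀ x : Fin n →₀ ℕ, φ x = if ¬ m ≤ x then f x else 0)
    (I : Fin n →₀ ℕ)
    (G : MvPowerSeries (Fin n) K)
    (hG : ∀ e : Fin n →₀ ℕ,
      MvPowerSeries.coeff e G = if I ≤ e then f (e - I) else 0)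
    (Q : MvPowerSeries (Fin n) K)
    (hQ : Q = ∑ α ∈ Finset.Iic m, (MvPowerSeries.monomial (m - α)) (c α))
    (Φ : (Fin n → Bool) → (Fin n →₀ ℕ) → MvPowerSeries (Fin n) K)
    (hΦ : ∀ (J : Fin n → Bool) (τ e : Fin n →₀ ℕ),
      MvPowerSeries.coeff e (Φ J τ) =
        if I ≤ e ∧ τ ≤ e - I ∧ (∀ k, J k = false → (e - I) k = τ k)
        then φ (e - I) else 0) :
    Q * G =
      ∑ J : Fin n → Bool,
        ∑ τ ∈ (Finset.Iic m).filter
            (fun x => ∀ k, if J k then x k = m k else x k < m k),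
          Φ J τ *
            ∑ α ∈ (Finset.Iic m).filter (fun α => ¬ α ≤ τ),
              (MvPowerSeries.monomial (m - α)) (c α) := by
  let F : MvPowerSeries (Fin n) K := f
  let ψ (J : Fin n → Bool) (τ : Fin n →₀ ℕ) : MvPowerSeries (Fin n) K :=
    fun x => if τ ≤ x ∧ ∀ k, J k = false → x k = τ k then φ x else 0
  have hG' : G = monomial I 1 * F := eq_monomial_mul_of_coeff_eq_ite hG
  have hΦ' : ∀ J τ, Φ J τ = monomial I 1 * ψ J τ := fun J τ =>
    eq_monomial_mul_of_coeff_eq_ite fun e => (hΦ J τ e).trans (ite_and _ _ _ _)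
  -- `congr` reconciles the `Decidable (∀ k : Fin n, _)` instances: `Nat.decidableForallFin`
  -- here, `Fintype.decidableForallFintype` in the general lemmas.
  have key := sum_monomial_mul_eq_sum_boxFace (F := F) (ψ := ψ) hf hφ fun J τ x => by
    rw [coeff_apply]; dsimp only [ψ]; congr
  rw [hG', hQ, mul_left_comm, key]
  simp only [hΦ', mul_assoc, mul_sum, boxFace]
  congr!

/-- Theorem 2 of the paper: if `f : ℕⁿ → K` satisfies the difference equation
`Σ_{0 ≤ α ≤ m} c_α f(x+α) = 0` and `φ` equals `f` on `X₀` and `0` elsewhere, then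
`Q·G = Σ_{J ∈ {0,1}ⁿ} Σ_{τ ∈ Γ_J} Φ_{τ,J} · P̃_τ`, where `Γ_J` is the face of the box
`{0 ≤ x ≤ m}` given by `J`, `Φ_{τ,J} = Σ_{y, supp y ⊆ {k : J_k = 1}} φ(τ+y) w^{τ+y+I}`
and `P̃_τ = Σ_{α ≤ m, ¬(α ≤ τ)} c_α w^{m−α}`. -/
theorem generating_series_theorem_two
    (n : ℕ) (hn : 1 ≤ n) (K : Type*) [Field K]
    (m : Fin n →₀ ℕ) (c : (Fin n →₀ ℕ) → K) (f : (Fin n →₀ ℕ) → K)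
    (hf : ∀ x : Fin n →₀ ℕ, ∑ α ∈ Finset.Iic m, c α * f (x + α) = 0)
    (φ : (Fin n →₀ ℕ) → K)
    (hφ : ∀ x : Fin n →₀ ℕ, φ x = if ¬ m ≤ x then f x else 0)
    (I : Fin n →₀ ℕ) (hI : ∀ j, I j = 1)
    (G : MvPowerSeries (Fin n) K)
    (hG : ∀ e : Fin n →₀ ℕ,
      MvPowerSeries.coeff e G = if I ≤ e then f (e - I) else 0)
    (Q : MvPowerSeries (Fin n) K)
    (hQ : Q = ∑ α ∈ Finset.Iic m, (MvPowerSeries.monomial (m - α)) (c α))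
    (Φ : (Fin n → Bool) → (Fin n →₀ ℕ) → MvPowerSeries (Fin n) K)
    (hΦ : ∀ (J : Fin n → Bool) (τ e : Fin n →₀ ℕ),
      MvPowerSeries.coeff e (Φ J τ) =
        if I ≤ e ∧ τ ≤ e - I ∧ (∀ k, J k = false → (e - I) k = τ k)
        then φ (e - I) else 0) :
    Q * G =
      ∑ J : Fin n → Bool,
        ∑ τ ∈ (Finset.Iic m).filter
            (fun x => ∀ k, if J k then x k = m k else x k < m k),
          Φ J τ *
            ∑ α ∈ (Finset.Iic m).filter (fun α => ¬ α ≤ τ),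
              (MvPowerSeries.monomial (m - α)) (c α) :=
  generating_series_theorem_two_general n K m c f hf φ hφ I G hG Q hQ Φ hΦ
end

section
/- Let φ : ℕⁿ → ℂ be such that Φ(ξ) = Σ_{x ∈ ℕⁿ} φ(x) ξ^x converges absolutely for all ξ ∈ ℂⁿ with |ξ_j| < ρ_j (j = 1,…,n). Fix τ ∈ ℕⁿ, J ∈ {0,1}ⁿ, and radii 0 < R_j < ρ_j. Then for every z ∈ ℂⁿ with |z_j| < R_j for all j, the series Φ_{τ,J}(z) = Σ_{y ∈ ℕⁿ with y_k = 0 whenever J_k = 0} φ(τ+y) · z^{τ+y} converges absolutely, and Φ_{τ,J}(z) = z^τ / (2πi)ⁿ · ∮_Γ Φ(ξ) / ( (ξ−z)^J · ξ^{τ−J+I} ) dξ, where Γ is the torus {ξ ∈ ℂⁿ : |ξ_j| = R_j, j = 1,…,n}, (ξ−z)^J = Π_{j : J_j = 1} (ξ_j − z_j), ξ^{τ−J+I} = Π_j ξ_j^{τ_j − J_j + 1}, and ∮_Γ … dξ denotes the iterated contour integral over Γ (the torus integral). -/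
/-!
On the torus `|ξ_j| = R_j` the terms of `Φ` are dominated by those of the convergent series
`Σ |φ(x)| R^x`, so the torus integral of `Φ(ξ) / ((ξ - z)^J ξ^(τ - J + I))` may be taken term by
term. The integral of a monomial splits into one-variable circle integrals: for `J_j = 0` it is
`∮ ζ^a / ζ^(t+1) = 2πi δ_{a,t}`, and for `J_j = 1` it is `∮ ζ^a / ((ζ - w) ζ^t)`, which is
`2πi w^(a-t)` when `t ≤ a` and `0` otherwise. The monomials that survive are exactly the `ξ^(τ + y)`
with `y_k = 0` whenever `J_k = 0`.
-/

open Complex MeasureTheory Metric Set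
open scoped Real

theorem circleIntegral_zpow {R : ℝ} (hR : 0 < R) (m : ℤ) :
    (∮ ζ in C(0, R), ζ ^ m) = if m = -1 then 2 * π * I else 0 := by
  split_ifs with hm
  · simpa [hm] using circleIntegral.integral_sub_inv_of_mem_ball (mem_ball_self (x := (0 : ℂ)) hR)
  · simpa using circleIntegral.integral_sub_zpow_of_ne hm 0 0 R

theorem circleIntegral_sub_inv_mul_zpow {R : ℝ} {w : ℂ} (hw : ‖w‖ < R) (m : ℤ) :
    (∮ ζ in C(0, R), (ζ - w)⁻¹ * ζ ^ m) = if 0 ≤ m then 2 * π * I * w ^ m else 0 := by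
  have hR : 0 < R := (norm_nonneg w).trans_lt hw
  have hne : ∀ ζ ∈ sphere (0 : ℂ) R, ζ ≠ 0 := fun ζ hζ => ne_zero_of_mem_sphere hR.ne' ⟨ζ, hζ⟩
  have hm : CircleIntegrable (fun ζ : ℂ => ζ ^ m) 0 R :=
    (continuousOn_id.zpow₀ m fun ζ hζ => .inl (hne ζ hζ)).circleIntegrable hR.le
  have hsum := hasSum_two_pi_I_cauchyPowerSeries_integral hm hw
  simp only [sub_zero, zero_add, smul_eq_mul] at hsum
  -- expanding `(ζ - w)⁻¹` as a geometric series in `w / ζ`, only the term `k = m` survives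
  have hterm : ∀ k : ℕ, (∮ ζ in C(0, R), (w / ζ) ^ k * (ζ⁻¹ * ζ ^ m)) =
      if (k : ℤ) = m then 2 * π * I * w ^ k else 0 := by
    intro k
    have hcongr : EqOn (fun ζ : ℂ => (w / ζ) ^ k * (ζ⁻¹ * ζ ^ m))
        (fun ζ => w ^ k * ζ ^ (m - k - 1)) (sphere 0 R) := by
      intro ζ hζ
      simp only [div_pow, zpow_sub₀ (hne ζ hζ), zpow_natCast, zpow_one]
      field_simp [hne ζ hζ]
    rw [circleIntegral.integral_congr hR.le hcongr, circleIntegral.integral_const_mul,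
      circleIntegral_zpow hR]
    split_ifs <;> first | (exfalso; omega) | ring
  simp only [hterm] at hsum
  rw [← hsum.tsum_eq]
  split_ifs with h0
  · lift m to ℕ using h0
    simp only [Nat.cast_inj, zpow_natCast, tsum_ite_eq]
  · simp [show ∀ k : ℕ, (k : ℤ) ≠ m from fun k => by omega]

/-- The `j`-th factor `(ζ - w)^b ζ^(t - b + 1)` of the denominator `(ξ - z)^J ξ^(τ - J + I)`. -/
def sectionDenom (b : Bool) (w : ℂ) (t : ℕ) (ζ : ℂ) : ℂ :=
  (if b then ζ - w else 1) * ζ ^ (t + 1 - if b then 1 else 0)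

theorem continuous_sectionDenom (b : Bool) (w : ℂ) (t : ℕ) : Continuous (sectionDenom b w t) := by
  unfold sectionDenom
  cases b <;> simp only [Bool.false_eq_true, if_true, if_false] <;> fun_prop

theorem sectionDenom_ne_zero {b : Bool} {w ζ : ℂ} (hw : ‖w‖ < ‖ζ‖) (t : ℕ) :
    sectionDenom b w t ζ ≠ 0 := by
  have hζ : ζ ≠ 0 := norm_pos_iff.1 ((norm_nonneg w).trans_lt hw)
  have hζw : ζ - w ≠ 0 := sub_ne_zero.2 fun h => hw.ne (by rw [h])
  cases b <;> simp [sectionDenom, hζ, hζw]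

theorem circleIntegral_pow_div_sectionDenom {R : ℝ} {w : ℂ} (hw : ‖w‖ < R) (b : Bool) (a t : ℕ) :
    (∮ ζ in C(0, R), ζ ^ a / sectionDenom b w t ζ) =
      if t ≤ a ∧ (b = false → a = t) then 2 * π * I * w ^ (a - t) else 0 := by
  have hR : 0 < R := (norm_nonneg w).trans_lt hw
  have hne : ∀ ζ ∈ sphere (0 : ℂ) R, ζ ≠ 0 := fun ζ hζ => ne_zero_of_mem_sphere hR.ne' ⟨ζ, hζ⟩
  cases b
  · have hcongr : EqOn (fun ζ : ℂ => ζ ^ a / sectionDenom false w t ζ)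
        (fun ζ => ζ ^ ((a : ℤ) - (t + 1))) (sphere 0 R) := by
      intro ζ hζ
      simp [sectionDenom, zpow_sub₀ (hne ζ hζ), ← zpow_natCast, div_eq_mul_inv]
    rw [circleIntegral.integral_congr hR.le hcongr, circleIntegral_zpow hR]
    split_ifs <;> first | (exfalso; omega) | simp_all
  · have hcongr : EqOn (fun ζ : ℂ => ζ ^ a / sectionDenom true w t ζ)
        (fun ζ => (ζ - w)⁻¹ * ζ ^ ((a : ℤ) - t)) (sphere 0 R) := by
      intro ζ hζ
      simp only [sectionDenom, ↓reduceIte, add_tsub_cancel_right, div_eq_mul_inv, mul_inv_rev,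
        zpow_sub₀ (hne ζ hζ), zpow_natCast]
      ring
    rw [circleIntegral.integral_congr hR.le hcongr, circleIntegral_sub_inv_mul_zpow hw]
    simp only [Bool.true_eq_false, false_implies, and_true]
    split_ifs with h₁ h₂ h₂
    · rw [← Nat.cast_sub h₂, zpow_natCast]
    all_goals first | (exfalso; omega) | rfl

section Torus

variable {n : ℕ} {E : Type*} [NormedAddCommGroup E] {c : Fin n → ℂ}
  {R : Fin n → ℝ}

theorem torusMap_mem_univ_pi_sphere (hR : ∀ j, 0 ≤ R j) (θ : Fin n → ℝ) :
    torusMap c R θ ∈ univ.pi fun j => sphere (c j) (R j) :=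
  fun j _ => circleMap_mem_sphere (c j) (hR j) (θ j)

theorem ContinuousOn.torusIntegrable {f : (Fin n → ℂ) → E} (hR : ∀ j, 0 ≤ R j)
    (hf : ContinuousOn f (univ.pi fun j => sphere (c j) (R j))) : TorusIntegrable f c R :=
  (hf.comp_continuous (by unfold torusMap; fun_prop)
    (torusMap_mem_univ_pi_sphere hR)).continuousOn.integrableOn_compact isCompact_Icc

theorem torusIntegral_prod (f : Fin n → ℂ → ℂ) (c : Fin n → ℂ) (R : Fin n → ℝ) :
    (∯ ξ in T(c, R), ∏ j, f j (ξ j)) = ∏ j, ∮ ζ in C(c j, R j), f j ζ := by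
  simp only [torusIntegral, smul_eq_mul, ← Finset.prod_mul_distrib]
  rw [← Set.pi_univ_Icc, volume_pi, Measure.restrict_pi_pi]
  refine (integral_fintype_prod_eq_prod
    fun j (s : ℝ) => (R j * exp (s * I) * I : ℂ) * f j (circleMap (c j) (R j) s)).trans ?_
  refine Finset.prod_congr rfl fun j _ => ?_
  rw [circleIntegral, intervalIntegral.integral_of_le Real.two_pi_pos.le,
    ← integral_Icc_eq_integral_Ioc]
  simp [deriv_circleMap, circleMap]

theorem hasSum_torusIntegral_of_dominated [NormedSpace ℂ E] {ι : Type*} [Countable ι]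
    {F : ι → (Fin n → ℂ) → E} {f : (Fin n → ℂ) → E} (bound : ι → ℝ)
    (hF : ∀ i, TorusIntegrable (F i) c R) (h_bound : ∀ i θ, ‖F i (torusMap c R θ)‖ ≤ bound i)
    (h_summable : Summable bound)
    (h_lim : ∀ θ, HasSum (fun i => F i (torusMap c R θ)) (f (torusMap c R θ))) :
    HasSum (fun i => ∯ ξ in T(c, R), F i ξ) (∯ ξ in T(c, R), f ξ) := by
  unfold torusIntegral
  refine hasSum_integral_of_dominated_convergence (fun i _ => (∏ j, |R j|) * bound i)
    (fun i => (hF i).function_integrable.aestronglyMeasurable)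
    (fun i => ae_of_all _ fun θ => ?_) (ae_of_all _ fun _ => h_summable.mul_left _) ?_
    (ae_of_all _ fun θ => (h_lim θ).const_smul _)
  · simp only [norm_smul, norm_prod, Complex.norm_mul, norm_real, Real.norm_eq_abs,
      norm_exp_ofReal_mul_I, mul_one, norm_I]
    gcongr
    exact h_bound i θ
  · exact integrableOn_const measure_Icc_lt_top.ne

end Torus

theorem hasSum_torusIntegral_mul_of_summable {n : ℕ} {φ : (Fin n → ℕ) → ℂ} {R : Fin n → ℝ}
    {g : (Fin n → ℂ) → ℂ} (hR : ∀ j, 0 ≤ R j) (hφ : Summable fun x => ‖φ x‖ * ∏ j, R j ^ x j)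
    (hg : ContinuousOn g (univ.pi fun j => sphere 0 (R j))) :
    HasSum (fun x => ∯ ξ in T(0, R), φ x * (∏ j, ξ j ^ x j) * g ξ)
      (∯ ξ in T(0, R), (∑' x, φ x * ∏ j, ξ j ^ x j) * g ξ) := by
  obtain ⟨M, hM⟩ :=
    (isCompact_univ_pi fun j => isCompact_sphere 0 (R j)).exists_bound_of_continuousOn hg
  have hnorm : ∀ x θ, ‖φ x * ∏ j, torusMap 0 R θ j ^ x j‖ = ‖φ x‖ * ∏ j, R j ^ x j := by
    simp [norm_prod, torusMap, abs_of_nonneg (hR _)]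
  refine hasSum_torusIntegral_of_dominated (fun x => ‖φ x‖ * (∏ j, R j ^ x j) * M)
    (fun x => ContinuousOn.torusIntegrable hR ((Continuous.continuousOn (by fun_prop)).mul hg))
    (fun x θ => ?_) (hφ.mul_right M) (fun θ => ?_)
  · rw [norm_mul, hnorm]
    exact mul_le_mul_of_nonneg_left (hM _ (torusMap_mem_univ_pi_sphere hR θ))
      (mul_nonneg (norm_nonneg _) (Finset.prod_nonneg fun j _ => pow_nonneg (hR j) _))
  · exact (Summable.of_norm (hφ.congr fun x => (hnorm x θ).symm)).hasSum.mul_right _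

theorem continuousOn_inv_prod_sectionDenom {n : ℕ} {R : Fin n → ℝ} {z : Fin n → ℂ}
    (hz : ∀ j, ‖z j‖ < R j) (τ : Fin n → ℕ) (J : Fin n → Bool) :
    ContinuousOn (fun ξ => (∏ j, sectionDenom (J j) (z j) (τ j) (ξ j))⁻¹)
      (univ.pi fun j => sphere 0 (R j)) :=
  (continuous_finsetProd _ fun j _ => (continuous_sectionDenom _ _ _).comp
    (continuous_apply j)).continuousOn.inv₀ fun ξ hξ => Finset.prod_ne_zero_iff.2 fun j _ =>
      sectionDenom_ne_zero (by rw [mem_sphere_zero_iff_norm.1 (hξ j trivial)]; exact hz j) _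

theorem torusIntegral_monomial_div_prod_sectionDenom {n : ℕ} {R : Fin n → ℝ} {z : Fin n → ℂ}
    (hz : ∀ j, ‖z j‖ < R j) (τ : Fin n → ℕ) (J : Fin n → Bool) (x : Fin n → ℕ) :
    (∯ ξ in T(0, R), (∏ j, ξ j ^ x j) / ∏ j, sectionDenom (J j) (z j) (τ j) (ξ j)) =
      ∏ j, if τ j ≤ x j ∧ (J j = false → x j = τ j) then 2 * π * I * z j ^ (x j - τ j) else 0 := by
  simp only [← Finset.prod_div_distrib]
  rw [torusIntegral_prod fun j ζ => ζ ^ x j / sectionDenom (J j) (z j) (τ j) ζ]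
  simp only [Pi.zero_apply, circleIntegral_pow_div_sectionDenom (hz _)]

theorem tsum_mul_prod_ite_eq_tsum_section {α : Type*} [CommSemiring α] [TopologicalSpace α]
    {n : ℕ} (φ : (Fin n → ℕ) → α) (τ : Fin n → ℕ) (J : Fin n → Bool) (f : Fin n → ℕ → α) :
    ∑' x, φ x * ∏ j, (if τ j ≤ x j ∧ (J j = false → x j = τ j) then f j (x j - τ j) else 0) =
      ∑' y : {y : Fin n → ℕ // ∀ k, J k = false → y k = 0},
        φ (τ + (y : Fin n → ℕ)) * ∏ j, f j ((y : Fin n → ℕ) j) := by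
  set S := {y : Fin n → ℕ // ∀ k, J k = false → y k = 0}
  have hinj : Function.Injective fun y : S => τ + (y : Fin n → ℕ) :=
    (add_right_injective τ).comp Subtype.val_injective
  have hsupp : Function.support (fun x => φ x * ∏ j,
      (if τ j ≤ x j ∧ (J j = false → x j = τ j) then f j (x j - τ j) else 0)) ⊆
      range fun y : S => τ + (y : Fin n → ℕ) := by
    intro x hx
    have hcond : ∀ j, τ j ≤ x j ∧ (J j = false → x j = τ j) := by
      by_contra h
      obtain ⟨j, hj⟩ := not_forall.1 h
      exact hx (by dsimp only; rw [Finset.prod_eq_zero (Finset.mem_univ j) (if_neg hj), mul_zero])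
    refine ⟨⟨x - τ, fun k hk => ?_⟩, funext fun j => ?_⟩
    · simp [(hcond k).2 hk]
    · simp [Nat.add_sub_cancel' (hcond j).1]
  rw [← hinj.tsum_eq hsupp]
  refine tsum_congr fun y => congrArg _ (Finset.prod_congr rfl fun j _ => ?_)
  rw [Pi.add_apply, if_pos ⟨Nat.le_add_right _ _, fun h => by simp [y.2 j h]⟩,
    Nat.add_sub_cancel_left]

/-- Part 1° of Lemma 1 of the paper: if `Φ(ξ) = Σ_x φ(x) ξ^x` converges absolutely for
`|ξ_j| < ρ_j`, then for `0 < R_j < ρ_j` and `|z_j| < R_j` the section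
`Φ_{τ,J}(z) = Σ_{y : y_k = 0 for J_k = 0} φ(τ+y) z^{τ+y}` converges absolutely and is
given by the torus-integral formula
`Φ_{τ,J}(z) = z^τ/(2πi)ⁿ ∮_Γ Φ(ξ)/((ξ−z)^J ξ^{τ−J+I}) dξ` over the torus
`Γ = {|ξ_j| = R_j}`. -/
theorem section_integral_representation
    (n : ℕ) (φ : (Fin n → ℕ) → ℂ) (ρ : Fin n → ℝ)
    (hconv : ∀ ξ : Fin n → ℂ, (∀ j, ‖ξ j‖ < ρ j) →
      Summable fun x : Fin n → ℕ => ‖φ x * ∏ j, ξ j ^ x j‖)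
    (τ : Fin n → ℕ) (J : Fin n → Bool) (R : Fin n → ℝ)
    (hR : ∀ j, 0 < R j) (hRρ : ∀ j, R j < ρ j)
    (z : Fin n → ℂ) (hz : ∀ j, ‖z j‖ < R j) :
    (Summable fun y : {y : Fin n → ℕ // ∀ k, J k = false → y k = 0} =>
      ‖φ (τ + (y : Fin n → ℕ)) * ∏ j, z j ^ (τ j + (y : Fin n → ℕ) j)‖) ∧
    (∑' y : {y : Fin n → ℕ // ∀ k, J k = false → y k = 0},
        φ (τ + (y : Fin n → ℕ)) * ∏ j, z j ^ (τ j + (y : Fin n → ℕ) j)) =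
      (∏ j, z j ^ τ j) / (2 * Real.pi * Complex.I) ^ n *
        torusIntegral
          (fun ξ : Fin n → ℂ =>
            (∑' x : Fin n → ℕ, φ x * ∏ j, ξ j ^ x j) /
              ((∏ j, if J j then ξ j - z j else 1) *
                ∏ j, ξ j ^ (τ j + 1 - (if J j then 1 else 0))))
          0 R := by
  have hzρ : ∀ j, ‖z j‖ < ρ j := fun j => (hz j).trans (hRρ j)
  refine ⟨(hconv z hzρ).comp_injective ((add_right_injective τ).comp Subtype.val_injective), ?_⟩
  have hφR : Summable fun x => ‖φ x‖ * ∏ j, R j ^ x j := by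
    simpa [norm_prod, abs_of_pos (hR _)] using
      hconv (fun j => (R j : ℂ)) (by simpa [abs_of_pos (hR _)] using hRρ)
  have hintegrand : ∀ ξ : Fin n → ℂ, (∑' x : Fin n → ℕ, φ x * ∏ j, ξ j ^ x j) /
      ((∏ j, if J j then ξ j - z j else 1) * ∏ j, ξ j ^ (τ j + 1 - (if J j then 1 else 0))) =
      (∑' x : Fin n → ℕ, φ x * ∏ j, ξ j ^ x j) *
        (∏ j, sectionDenom (J j) (z j) (τ j) (ξ j))⁻¹ := fun ξ => by
    rw [div_eq_mul_inv, ← Finset.prod_mul_distrib]; rfl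
  have hterm : ∀ x, (∯ ξ in T(0, R), φ x * (∏ j, ξ j ^ x j) *
      (∏ j, sectionDenom (J j) (z j) (τ j) (ξ j))⁻¹) = φ x * ∏ j,
      if τ j ≤ x j ∧ (J j = false → x j = τ j) then 2 * π * I * z j ^ (x j - τ j) else 0 := by
    intro x
    simp only [mul_assoc (φ x), ← div_eq_mul_inv]
    rw [torusIntegral_const_mul, torusIntegral_monomial_div_prod_sectionDenom hz]
  simp only [hintegrand]
  rw [← (hasSum_torusIntegral_mul_of_summable (fun j => (hR j).le) hφR
      (continuousOn_inv_prod_sectionDenom hz τ J)).tsum_eq, tsum_congr hterm,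
    tsum_mul_prod_ite_eq_tsum_section φ τ J fun j k => 2 * π * I * z j ^ k, ← tsum_mul_left]
  refine tsum_congr fun y => ?_
  rw [Finset.prod_mul_distrib, Finset.prod_const, Finset.card_univ, Fintype.card_fin]
  simp only [pow_add, Finset.prod_mul_distrib]
  field_simp [two_pi_I_ne_zero]
end

section
/- Assume c_m ≠ 0. Then for every function φ : X₀ → K there exists a unique function f : ℕⁿ → K such that Σ_{0 ≤ α ≤ m} c_α f(x+α) = 0 for every x ∈ ℕⁿ and f(x) = φ(x) for every x ∈ X₀. -/
open Finset

lemma cauchy_deg_lt {n : ℕ} {m x α : Fin n →₀ ℕ} (h : m ≤ x) (hα : α ≤ m) (hne : α ≠ m) :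
    (∑ i, ((x - m) + α) i) < ∑ i, x i := by
  have hx : (x - m) + m = x := tsub_add_cancel_of_le h
  have h1 : ∑ i, ((x - m) + α) i = (∑ i, (x - m) i) + ∑ i, α i := by
    simp [Finsupp.add_apply, Finset.sum_add_distrib]
  have h2 : (∑ i, (x - m) i) + ∑ i, m i = ∑ i, x i := by
    rw [← Finset.sum_add_distrib]
    simp only [Finsupp.tsub_apply, Finsupp.add_apply] at hx ⊢
    exact Finset.sum_congr rfl fun i _ => Nat.sub_add_cancel ((Finsupp.le_def.mp h) i)
  have h3 : ∑ i, α i < ∑ i, m i := by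
    apply Finset.sum_lt_sum (fun i _ => (Finsupp.le_def.mp hα) i)
    by_contra hcon
    push_neg at hcon
    exact hne (Finsupp.ext fun i =>
      le_antisymm ((Finsupp.le_def.mp hα) i) (hcon i (mem_univ i)))
  omega

noncomputable def cauchySol {n : ℕ} {K : Type*} [Field K]
    (m : Fin n →₀ ℕ) (c : (Fin n →₀ ℕ) → K)
    (φ : {x : Fin n →₀ ℕ // ¬ m ≤ x} → K) : (Fin n →₀ ℕ) → K :=
  fun x =>
    if h : m ≤ x then
      -(c m)⁻¹ * ∑ α ∈ ((Finset.Iic m).erase m).attach,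
        c α.1 * cauchySol m c φ ((x - m) + α.1)
    else φ ⟨x, h⟩
termination_by x => ∑ i, x i
decreasing_by
  exact cauchy_deg_lt h (Finset.mem_Iic.mp (Finset.mem_of_mem_erase α.2))
    (Finset.ne_of_mem_erase α.2)

/-- Unique solvability of the Cauchy problem: if `c_m ≠ 0`, then for every choice of
initial data `φ` on the initial set `X₀ = {x ∈ ℕⁿ : ¬(m ≤ x)}` there is a unique
function `f : ℕⁿ → K` satisfying the difference equation
`Σ_{0 ≤ α ≤ m} c_α f(x+α) = 0` for all `x ∈ ℕⁿ` and agreeing with `φ` on `X₀`. -/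
theorem cauchy_problem_unique_solvability
    (n : ℕ) (hn : 1 ≤ n) (K : Type*) [Field K]
    (m : Fin n →₀ ℕ) (c : (Fin n →₀ ℕ) → K) (hc : c m ≠ 0)
    (φ : {x : Fin n →₀ ℕ // ¬ m ≤ x} → K) :
    ∃! f : (Fin n →₀ ℕ) → K,
      (∀ x : Fin n →₀ ℕ, ∑ α ∈ Finset.Iic m, c α * f (x + α) = 0) ∧
      (∀ x : Fin n →₀ ℕ, ∀ hx : ¬ m ≤ x, f x = φ ⟨x, hx⟩) := by
  set f := cauchySol m c φ with hf
  have hsol : ∀ x : Fin n →₀ ℕ, m ≤ x →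
      f x = -(c m)⁻¹ * ∑ α ∈ (Finset.Iic m).erase m, c α * f ((x - m) + α) := by
    intro x h
    rw [hf, cauchySol, dif_pos h, ← Finset.sum_attach ((Finset.Iic m).erase m)
      (fun α => c α * cauchySol m c φ ((x - m) + α))]
  have hinit : ∀ x : Fin n →₀ ℕ, ∀ hx : ¬ m ≤ x, f x = φ ⟨x, hx⟩ := by
    intro x hx
    rw [hf, cauchySol, dif_neg hx]
  have heq : ∀ x : Fin n →₀ ℕ, ∑ α ∈ Finset.Iic m, c α * f (x + α) = 0 := by
    intro x
    have hm : m ∈ Finset.Iic m := Finset.mem_Iic.mpr le_rfl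
    rw [← Finset.add_sum_erase _ _ hm]
    have h1 : m ≤ x + m := le_add_self
    have h2 : (x + m) - m = x := add_tsub_cancel_right x m
    rw [hsol (x + m) h1, h2]
    field_simp
    ring
  refine ⟨f, ⟨heq, hinit⟩, ?_⟩
  rintro g ⟨hgeq, hginit⟩
  funext x
  have key : ∀ d : ℕ, ∀ x : Fin n →₀ ℕ, (∑ i, x i) = d → g x = f x := by
    intro d
    induction d using Nat.strong_induction_on with
    | _ d ih =>
      intro x hd
      by_cases h : m ≤ x
      · have hx : (x - m) + m = x := tsub_add_cancel_of_le h
        have hm : m ∈ Finset.Iic m := Finset.mem_Iic.mpr le_rfl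
        have hg := hgeq (x - m)
        have hfe := heq (x - m)
        rw [← Finset.add_sum_erase _ _ hm] at hg hfe
        rw [hx] at hg hfe
        have hsum : ∑ α ∈ (Finset.Iic m).erase m, c α * g ((x - m) + α)
            = ∑ α ∈ (Finset.Iic m).erase m, c α * f ((x - m) + α) := by
          apply Finset.sum_congr rfl
          intro α hα
          have hlt := cauchy_deg_lt h (Finset.mem_Iic.mp (Finset.mem_of_mem_erase hα))
            (Finset.ne_of_mem_erase hα)
          rw [ih _ (hd ▸ hlt) _ rfl]
        rw [hsum] at hg
        have : c m * g x = c m * f x := by linear_combination hg - hfe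
        exact mul_left_cancel₀ hc this
      · rw [hginit x h, hinit x h]
  exact key _ x rfl
end

section
/- For x, y ∈ ℕ let r(x,y) be the number of sequences a₁a₂⋯a_x with a₁ = 0 and a_j ∈ {0,1} for 2 ≤ j ≤ x, having exactly y isolated elements, where a_j is called isolated if it differs from every element in a neighboring position (a_j ≠ a_{j−1} whenever j > 1, and a_j ≠ a_{j+1} whenever j < x; in particular, for x = 1 the single element is isolated). Then for all x, y ∈ ℕ: r(x+2, y+1) − r(x+1, y+1) − r(x+1, y) − r(x, y+1) + r(x, y) = 0. -/
/-! Split the sequences of length `n + 1` starting with `0` according to whether their last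
entry is isolated; call the two counts `U n y` and `V n y` (the sizes of `lastIsolated n y` and
`lastNotIsolated n y`), so `r(n+1, y) = U n y + V n y`.
Appending the complement of the last entry creates a new isolated entry and leaves the status
of the old last one unchanged, so `U n (y+1) = r(n, y)`; for `n = 0` this says that the only
sequence of length one, `0`, has one isolated entry. Appending a copy of the
last entry creates a non-isolated entry and destroys the isolation of the old last one, so
`V (n+1) y = U n (y+1) + V n y`. Eliminating `U` and `V` from these relations gives the
recurrence. -/

/-- `a j` is isolated in the sequence `a` if it differs from every element in a
neighboring position. -/
def IsIsolated {x : ℕ} (a : Fin x → Bool) (i : Fin x) : Prop :=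
  ∀ j : Fin x, ((j : ℕ) + 1 = (i : ℕ) ∨ (i : ℕ) + 1 = (j : ℕ)) → a i ≠ a j

/-- `seqCount x y` is the number of sequences `a₁a₂⋯a_x` with `a₁ = 0` and
`a_j ∈ {0,1}`, having exactly `y` isolated elements. -/
noncomputable def seqCount (x y : ℕ) : ℕ :=
  Nat.card {a : Fin x → Bool //
    (∀ i : Fin x, (i : ℕ) = 0 → a i = false) ∧
    Nat.card {i : Fin x // IsIsolated a i} = y}

open Finset

section

variable {n : ℕ}

instance (a : Fin n → Bool) : DecidablePred (IsIsolated a) := fun _ =>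
  inferInstanceAs (Decidable (∀ _, _ → _))

def StartsFalse (a : Fin n → Bool) : Prop := ∀ i : Fin n, (i : ℕ) = 0 → a i = false

instance : DecidablePred (StartsFalse (n := n)) := fun _ =>
  inferInstanceAs (Decidable (∀ _, _ → _))

def isolatedCount (a : Fin n → Bool) : ℕ := #{i | IsIsolated a i}

theorem isIsolated_snoc_castSucc (a : Fin (n + 1) → Bool) (b : Bool) (i : Fin (n + 1)) :
    IsIsolated (Fin.snoc a b : Fin (n + 2) → Bool) i.castSucc ↔
      IsIsolated a i ∧ (i = Fin.last n → a i ≠ b) := by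
  simp only [IsIsolated, Fin.forall_fin_succ' (n := n + 1), Fin.snoc_castSucc, Fin.snoc_last,
    Fin.val_castSucc, Fin.val_last, Fin.ext_iff]
  exact and_congr_right fun _ => imp_congr_left (by omega)

theorem isIsolated_snoc_last (a : Fin (n + 1) → Bool) (b : Bool) :
    IsIsolated (Fin.snoc a b : Fin (n + 2) → Bool) (Fin.last (n + 1)) ↔
      b ≠ a (Fin.last n) := by
  simp only [IsIsolated, Fin.forall_fin_succ' (n := n + 1), Fin.snoc_castSucc, Fin.snoc_last,
    Fin.val_castSucc, Fin.val_last]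
  refine ⟨fun h => h.1 (Fin.last n) (Or.inl (Fin.val_last n ▸ rfl)),
    fun hb => ⟨fun i hi => ?_, fun h => by omega⟩⟩
  obtain rfl : i = Fin.last n := Fin.ext (by rw [Fin.val_last]; omega)
  exact hb

theorem startsFalse_snoc (a : Fin (n + 1) → Bool) (b : Bool) :
    StartsFalse (Fin.snoc a b : Fin (n + 2) → Bool) ↔ StartsFalse a := by
  simp [StartsFalse]

theorem isolatedCount_snoc (a : Fin (n + 1) → Bool) (b : Bool) :
    isolatedCount (Fin.snoc a b : Fin (n + 2) → Bool) =
      #{i | IsIsolated a i ∧ (i = Fin.last n → a i ≠ b)} +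
        if b ≠ a (Fin.last n) then 1 else 0 := by
  simp only [isolatedCount, card_filter, Fin.sum_univ_castSucc (n := n + 1),
    isIsolated_snoc_castSucc, isIsolated_snoc_last]

theorem isolatedCount_snoc_not (a : Fin (n + 1) → Bool) :
    isolatedCount (Fin.snoc a (!a (Fin.last n)) : Fin (n + 2) → Bool) = isolatedCount a + 1 := by
  rw [isolatedCount_snoc]
  simp +contextual [isolatedCount]

theorem isolatedCount_snoc_self (a : Fin (n + 1) → Bool) :
    isolatedCount (Fin.snoc a (a (Fin.last n)) : Fin (n + 2) → Bool) +
      (if IsIsolated a (Fin.last n) then 1 else 0) = isolatedCount a := by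
  rw [isolatedCount_snoc, isolatedCount]
  simp only [card_filter, Fin.sum_univ_castSucc (n := n)]
  simp [Fin.castSucc_ne_last]

end

def seqFinset (n y : ℕ) : Finset (Fin n → Bool) := {a | StartsFalse a ∧ isolatedCount a = y}

def lastIsolated (n y : ℕ) : Finset (Fin (n + 1) → Bool) :=
  {a ∈ seqFinset (n + 1) y | IsIsolated a (Fin.last n)}

def lastNotIsolated (n y : ℕ) : Finset (Fin (n + 1) → Bool) :=
  {a ∈ seqFinset (n + 1) y | ¬IsIsolated a (Fin.last n)}

theorem seqCount_eq_card (n y : ℕ) : seqCount n y = #(seqFinset n y) := by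
  rw [seqCount, Nat.card_eq_fintype_card, Fintype.card_subtype]
  congr 1
  ext a
  rw [seqFinset, mem_filter, mem_filter]
  simp [isolatedCount, StartsFalse, Nat.card_eq_fintype_card, Fintype.card_subtype]

theorem seqCount_succ (n y : ℕ) :
    seqCount (n + 1) y = #(lastIsolated n y) + #(lastNotIsolated n y) := by
  rw [seqCount_eq_card]
  exact (card_filter_add_card_filter_not _).symm

theorem isolatedCount_fin_zero (a : Fin 0 → Bool) : isolatedCount a = 0 := by
  simp [isolatedCount]

theorem isolatedCount_fin_one (a : Fin 1 → Bool) : isolatedCount a = 1 := by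
  revert a; decide

theorem card_lastIsolated_zero (y : ℕ) : #(lastIsolated 0 (y + 1)) = #(seqFinset 0 y) := by
  rcases y with _ | y
  · decide
  · simp [lastIsolated, seqFinset, isolatedCount_fin_zero, isolatedCount_fin_one]

section

variable {n y : ℕ}

theorem snoc_not_mem_lastIsolated_iff (a : Fin (n + 1) → Bool) :
    (Fin.snoc a (!a (Fin.last n)) : Fin (n + 2) → Bool) ∈ lastIsolated (n + 1) (y + 1) ↔
      a ∈ seqFinset (n + 1) y := by
  simp [lastIsolated, seqFinset, startsFalse_snoc, isolatedCount_snoc_not, isIsolated_snoc_last]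

theorem snoc_self_mem_lastNotIsolated_iff (a : Fin (n + 1) → Bool) :
    (Fin.snoc a (a (Fin.last n)) : Fin (n + 2) → Bool) ∈ lastNotIsolated (n + 1) y ↔
      a ∈ lastIsolated n (y + 1) ∪ lastNotIsolated n y := by
  have hcount := isolatedCount_snoc_self a
  by_cases h : IsIsolated a (Fin.last n) <;>
    simp only [h, lastIsolated, lastNotIsolated, seqFinset, mem_union, mem_filter, mem_univ,
      true_and, startsFalse_snoc, isIsolated_snoc_last, not_true_eq_false, not_false_eq_true,
      and_true, and_false, or_false, false_or, ↓reduceIte, add_zero, ne_eq,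
      and_congr_right_iff] at hcount ⊢ <;>
    omega

theorem snoc_init_not_of_isIsolated_last {s : Fin (n + 2) → Bool}
    (h : IsIsolated s (Fin.last (n + 1))) :
    Fin.snoc (Fin.init s) (!Fin.init s (Fin.last n)) = s := by
  rw [← Fin.snoc_init_self s, isIsolated_snoc_last] at h
  conv_rhs => rw [← Fin.snoc_init_self s]
  rw [Bool.eq_not.mpr h]

theorem snoc_init_self_of_not_isIsolated_last {s : Fin (n + 2) → Bool}
    (h : ¬IsIsolated s (Fin.last (n + 1))) :
    Fin.snoc (Fin.init s) (Fin.init s (Fin.last n)) = s := by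
  rw [← Fin.snoc_init_self s, isIsolated_snoc_last, not_not] at h
  conv_rhs => rw [← Fin.snoc_init_self s]
  rw [h]

end

theorem card_lastIsolated_succ_succ (n y : ℕ) :
    #(lastIsolated (n + 1) (y + 1)) = #(seqFinset (n + 1) y) := by
  refine (card_nbij' (fun a => Fin.snoc a (!a (Fin.last n))) Fin.init (fun a ha => ?_)
    (fun s hs => ?_) (fun a _ => Fin.init_snoc _ _) (fun s hs => ?_)).symm
  · exact (snoc_not_mem_lastIsolated_iff a).mpr ha
  · have hlast := (mem_filter.mp hs).2
    rw [mem_coe, ← snoc_init_not_of_isIsolated_last hlast] at hs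
    exact (snoc_not_mem_lastIsolated_iff _).mp hs
  · exact snoc_init_not_of_isIsolated_last (mem_filter.mp hs).2

theorem card_lastIsolated_succ (n y : ℕ) : #(lastIsolated n (y + 1)) = seqCount n y := by
  rw [seqCount_eq_card]
  cases n with
  | zero => exact card_lastIsolated_zero y
  | succ n => exact card_lastIsolated_succ_succ n y

theorem card_lastNotIsolated_succ (n y : ℕ) :
    #(lastNotIsolated (n + 1) y) = #(lastIsolated n (y + 1)) + #(lastNotIsolated n y) := by
  have hdisj : Disjoint (lastIsolated n (y + 1)) (lastNotIsolated n y) :=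
    disjoint_left.mpr fun _ h₁ h₂ => (mem_filter.mp h₂).2 (mem_filter.mp h₁).2
  rw [← card_union_of_disjoint hdisj]
  refine (card_nbij' (fun a => Fin.snoc a (a (Fin.last n))) Fin.init (fun a ha => ?_)
    (fun s hs => ?_) (fun a _ => Fin.init_snoc _ _) (fun s hs => ?_)).symm
  · exact (snoc_self_mem_lastNotIsolated_iff a).mpr ha
  · have hlast := (mem_filter.mp hs).2
    rw [mem_coe, ← snoc_init_self_of_not_isIsolated_last hlast] at hs
    exact (snoc_self_mem_lastNotIsolated_iff _).mp hs
  · exact snoc_init_self_of_not_isIsolated_last (mem_filter.mp hs).2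

/-- The counting function `r(x,y)` of binary sequences starting with `0` with exactly
`y` isolated elements satisfies the difference equation
`r(x+2,y+1) − r(x+1,y+1) − r(x+1,y) − r(x,y+1) + r(x,y) = 0`. -/
theorem isolated_count_difference_equation :
    ∀ x y : ℕ,
      (seqCount (x + 2) (y + 1) : ℤ) - seqCount (x + 1) (y + 1) - seqCount (x + 1) y
        - seqCount x (y + 1) + seqCount x y = 0 := by
  intro x y
  have hlong : seqCount (x + 2) (y + 1) =
      seqCount (x + 1) y + seqCount x (y + 1) + #(lastNotIsolated x (y + 1)) := by
    rw [seqCount_succ, card_lastIsolated_succ, card_lastNotIsolated_succ, card_lastIsolated_succ,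
      add_assoc]
  have hshort : seqCount (x + 1) (y + 1) = seqCount x y + #(lastNotIsolated x (y + 1)) := by
    rw [seqCount_succ, card_lastIsolated_succ]
  omega
end
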